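/- arXiv:2507.18456 — 11 statements merged into one kernel-verified Lean document; each statement's English description precedes it below -/
import Mathlib

section
/- Let α : H → H, β : K → H be maps and γ : H → K, δ : K → K be group homomorphisms satisfying, for all h, h' ∈ H and k, k' ∈ K: α(h·h') = α(h) · f_{γ(h)}(α(h')); β(k·k') = β(k) · f_{δ(k)}(β(k')); γ(f_k(h)) · δ(k) = δ(k) · γ(h); and α(f_k(h)) · f_{γ(f_k(h))}(β(k)) = β(k) · f_{δ(k)}(α(h)). Then the map θ : G → G defined by θ(h,k) = (α(h) · f_{γ(h)}(β(k)), γ(h)·δ(k)) is a group homomorphism (endomorphism of G). -/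
/-!
Write `A h = (α h, γ h)` and `B k = (β k, δ k)`. The first two conditions say that `A : H → G`
and `B : K → G` are homomorphisms, and the last two are the two components of
`A (f_k h) * B k = B k * A h`, the relation that `(h, 1)` and `(1, k)` satisfy in `G`.
Hence `A` and `B` extend to an endomorphism of `G` through the universal property of the
semidirect product, and this endomorphism is `θ (h, k) = A h * B k`.
-/

namespace SemidirectProduct

variable {N G M : Type*} [Group N] [Group G] [Group M] {φ : G →* MulAut N}

def mkHom (a : M → N) (c : M →* G) (ha : ∀ x y, a (x * y) = a x * φ (c x) (a y)) :
    M →* N ⋊[φ] G :=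
  MonoidHom.mk' (fun m => ⟨a m, c m⟩) fun x y => by ext <;> simp [ha]

end SemidirectProduct

/-- Given maps `α : H → H`, `β : K → H` and group homomorphisms
`γ : H → K`, `δ : K → K` satisfying the four matrix conditions, the map
`θ (h, k) = (α h * f (γ h) (β k), γ h * δ k)` is an endomorphism of `G = H ⋊[f] K`. -/
theorem endomorphism_of_matrix
    {H K : Type*} [Group H] [Group K] (f : K →* MulAut H)
    (α : H → H) (β : K → H) (γ : H →* K) (δ : K →* K)
    (h1 : ∀ h h' : H, α (h * h') = α h * f (γ h) (α h'))
    (h2 : ∀ k k' : K, β (k * k') = β k * f (δ k) (β k'))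
    (h3 : ∀ (h : H) (k : K), γ (f k h) * δ k = δ k * γ h)
    (h4 : ∀ (h : H) (k : K),
      α (f k h) * f (γ (f k h)) (β k) = β k * f (δ k) (α h)) :
    ∀ x y : H ⋊[f] K,
      (fun g : H ⋊[f] K =>
          (⟨α g.left * f (γ g.left) (β g.right), γ g.left * δ g.right⟩ :
            H ⋊[f] K)) (x * y) =
        (fun g : H ⋊[f] K =>
          (⟨α g.left * f (γ g.left) (β g.right), γ g.left * δ g.right⟩ :
            H ⋊[f] K)) x *
        (fun g : H ⋊[f] K =>
          (⟨α g.left * f (γ g.left) (β g.right), γ g.left * δ g.right⟩ :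
            H ⋊[f] K)) y := by
  let A : H →* H ⋊[f] K := SemidirectProduct.mkHom α γ h1
  let B : K →* H ⋊[f] K := SemidirectProduct.mkHom β δ h2
  have hAB : ∀ k h, A (f k h) * B k = B k * A h := fun k h => by
    ext
    · exact h4 h k
    · exact h3 h k
  exact map_mul <| SemidirectProduct.lift A B fun k =>
    MonoidHom.ext fun h => eq_mul_inv_of_mul_eq (hAB k h)
end

section
/- Let θ and θ' be endomorphisms of G with matrices (α, β, γ, δ) and (α', β', γ', δ') respectively. Then the matrix (a, b, c, d) of the composite θ' ∘ θ is given for all h ∈ H and k ∈ K by: a(h) = α'(α(h)) · f_{γ'(α(h))}(β'(γ(h))); b(k) = α'(β(k)) · f_{γ'(β(k))}(β'(δ(k))); c(h) = γ'(α(h)) · δ'(γ(h)); and d(k) = γ'(β(k)) · δ'(δ(k)). -/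
namespace SemidirectProduct

variable {N G N' G' : Type*} [Group N] [Group G] [Group N'] [Group G']
  {φ : G →* MulAut N} {φ' : G' →* MulAut N'}

theorem map_mk_eq_of_matrix (θ : N ⋊[φ] G →* N' ⋊[φ'] G')
    {α : N → N'} {β : G → N'} {γ : N → G'} {δ : G → G'}
    (hN : ∀ n : N, θ ⟨n, 1⟩ = ⟨α n, γ n⟩) (hG : ∀ g : G, θ ⟨1, g⟩ = ⟨β g, δ g⟩)
    (n : N) (g : G) : θ ⟨n, g⟩ = ⟨α n * φ' (γ n) (β g), γ n * δ g⟩ := by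
  rw [mk_eq_inl_mul_inr, map_mul]
  exact congr($(hN n) * $(hG g))

end SemidirectProduct

open SemidirectProduct in
/-- If `θ` and `θ'` are endomorphisms of `G = H ⋊[f] K` with matrices
`(α, β, γ, δ)` and `(α', β', γ', δ')`, then the matrix `(a, b, c, d)` of the composite
`θ' ∘ θ` is given by `a h = α' (α h) * f (γ' (α h)) (β' (γ h))`,
`b k = α' (β k) * f (γ' (β k)) (β' (δ k))`, `c h = γ' (α h) * δ' (γ h)` and
`d k = γ' (β k) * δ' (δ k)`. -/
theorem matrix_of_composite
    {H K : Type*} [Group H] [Group K] (f : K →* MulAut H)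
    (θ θ' : (H ⋊[f] K) →* (H ⋊[f] K))
    (α : H → H) (β : K → H) (γ : H → K) (δ : K → K)
    (α' : H → H) (β' : K → H) (γ' : H → K) (δ' : K → K)
    (hθH : ∀ h : H, θ ⟨h, 1⟩ = ⟨α h, γ h⟩)
    (hθK : ∀ k : K, θ ⟨1, k⟩ = ⟨β k, δ k⟩)
    (hθ'H : ∀ h : H, θ' ⟨h, 1⟩ = ⟨α' h, γ' h⟩)
    (hθ'K : ∀ k : K, θ' ⟨1, k⟩ = ⟨β' k, δ' k⟩) :
    (∀ h : H, (θ'.comp θ) ⟨h, 1⟩ =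
      ⟨α' (α h) * f (γ' (α h)) (β' (γ h)), γ' (α h) * δ' (γ h)⟩) ∧
    (∀ k : K, (θ'.comp θ) ⟨1, k⟩ =
      ⟨α' (β k) * f (γ' (β k)) (β' (δ k)), γ' (β k) * δ' (δ k)⟩) := by
  refine ⟨fun h ↦ ?_, fun k ↦ ?_⟩
  · rw [MonoidHom.comp_apply, hθH, map_mk_eq_of_matrix θ' hθ'H hθ'K]
  · rw [MonoidHom.comp_apply, hθK, map_mk_eq_of_matrix θ' hθ'H hθ'K]
end

section
/- Let θ be an endomorphism of G with matrix (α, β, γ, δ) such that α is bijective and Δ := det_K(θ) is bijective. Then θ is bijective, its inverse satisfies θ⁻¹(h,1) = (α'(h), γ'(h)) for all h ∈ H and θ⁻¹(1,k) = (β'(k), Δ⁻¹(k)) for all k ∈ K, where γ'(h) = Δ⁻¹((γ(α⁻¹(h)))⁻¹), β'(k) = (α⁻¹(β(Δ⁻¹(k))))⁻¹, and α'(h) = α⁻¹(h) · (α⁻¹(β(Δ⁻¹((γ(α⁻¹(h)))⁻¹))))⁻¹. Moreover, Δ is a group homomorphism: Δ(k·k') = Δ(k)·Δ(k') for all k, k'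 ∈ K. -/
/-!
Writing `u = α⁻¹ (β k)`, the images `θ (1, k) = (β k, δ k)` and `θ (u, 1) = (β k, γ u)` share
their `H`-component, so `θ (u⁻¹, k) = (1, det_K θ k)`. Conversely, the `H`-component of
`θ (x, k)` is `α (x * u)`, so `(u⁻¹, k)` is the only element with `K`-component `k` that `θ` maps
into `K`. Hence `k ↦ (u⁻¹, k)` is a homomorphism `K → G`, and `det_K θ` is its composite with
`θ` and the projection to `K`. Injectivity of `θ` follows from that of `det_K θ`, and the
explicit preimages of `(h, 1)` and `(1, k)` give surjectivity and the matrix of `θ⁻¹`.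
-/

namespace SemidirectProduct

variable {H K : Type*} [Group H] [Group K] {f : K →* MulAut H}

def detK (αi : H → H) (β : K → H) (γ : H → K) (δ : K → K) (k : K) : K :=
  (γ (αi (β k)))⁻¹ * δ k

variable {θ : H ⋊[f] K →* H ⋊[f] K} {α αi : H → H} {β : K → H} {γ : H → K} {δ : K → K}

theorem map_mk_inv_eq_inr_detK (hθH : ∀ h : H, θ ⟨h, 1⟩ = ⟨α h, γ h⟩)
    (hθK : ∀ k : K, θ ⟨1, k⟩ = ⟨β k, δ k⟩) (hα : Function.RightInverse αi α) (k : K) :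
    θ ⟨(αi (β k))⁻¹, k⟩ = inr (detK αi β γ δ k) := by
  have hsplit : (⟨(αi (β k))⁻¹, k⟩ : H ⋊[f] K) = (⟨αi (β k), 1⟩ : H ⋊[f] K)⁻¹ * ⟨1, k⟩ := by
    ext <;> simp
  rw [hsplit, map_mul, map_inv, hθH, hθK, hα]
  ext <;> simp [detK]

theorem left_map (hθH : ∀ h : H, θ ⟨h, 1⟩ = ⟨α h, γ h⟩)
    (hθK : ∀ k : K, θ ⟨1, k⟩ = ⟨β k, δ k⟩) (hα : Function.RightInverse αi α)
    (g : H ⋊[f] K) : (θ g).left = α (g.left * αi (β g.right)) := by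
  have hsplit : g = ⟨g.left * αi (β g.right), 1⟩ * ⟨(αi (β g.right))⁻¹, g.right⟩ := by
    ext <;> simp
  conv_lhs => rw [hsplit, map_mul, map_mk_inv_eq_inr_detK hθH hθK hα, hθH]
  simp

theorem eq_mk_of_left_map_eq_one (hθH : ∀ h : H, θ ⟨h, 1⟩ = ⟨α h, γ h⟩)
    (hθK : ∀ k : K, θ ⟨1, k⟩ = ⟨β k, δ k⟩) (hα : Function.LeftInverse αi α)
    (hα' : Function.RightInverse αi α) {g : H ⋊[f] K} (hg : (θ g).left = 1) :
    g = ⟨(αi (β g.right))⁻¹, g.right⟩ := by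
  have hα1 : α 1 = 1 := congrArg left ((hθH 1).symm.trans (map_one θ))
  rw [left_map hθH hθK hα', ← hα1] at hg
  ext
  · exact eq_inv_of_mul_eq_one_left (hα.injective hg)
  · rfl

theorem mk_inv_mul_mk_inv (hθH : ∀ h : H, θ ⟨h, 1⟩ = ⟨α h, γ h⟩)
    (hθK : ∀ k : K, θ ⟨1, k⟩ = ⟨β k, δ k⟩) (hα : Function.LeftInverse αi α)
    (hα' : Function.RightInverse αi α) (k k' : K) :
    (⟨(αi (β k))⁻¹, k⟩ * ⟨(αi (β k'))⁻¹, k'⟩ : H ⋊[f] K) = ⟨(αi (β (k * k')))⁻¹, k * k'⟩ :=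
  eq_mk_of_left_map_eq_one hθH hθK hα hα' <| by
    rw [map_mul, map_mk_inv_eq_inr_detK hθH hθK hα', map_mk_inv_eq_inr_detK hθH hθK hα']
    simp

theorem detK_mul (hθH : ∀ h : H, θ ⟨h, 1⟩ = ⟨α h, γ h⟩)
    (hθK : ∀ k : K, θ ⟨1, k⟩ = ⟨β k, δ k⟩) (hα : Function.LeftInverse αi α)
    (hα' : Function.RightInverse αi α) (k k' : K) :
    detK αi β γ δ (k * k') = detK αi β γ δ k * detK αi β γ δ k' := by
  apply inr_injective (φ := f)
  rw [map_mul, ← map_mk_inv_eq_inr_detK hθH hθK hα', ← mk_inv_mul_mk_inv hθH hθK hα hα',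
    map_mul, map_mk_inv_eq_inr_detK hθH hθK hα', map_mk_inv_eq_inr_detK hθH hθK hα']

theorem injective_of_detK_injective (hθH : ∀ h : H, θ ⟨h, 1⟩ = ⟨α h, γ h⟩)
    (hθK : ∀ k : K, θ ⟨1, k⟩ = ⟨β k, δ k⟩) (hα : Function.LeftInverse αi α)
    (hα' : Function.RightInverse αi α) (hΔ : Function.Injective (detK αi β γ δ)) :
    Function.Injective θ := by
  refine (injective_iff_map_eq_one θ).mpr fun g hg => ?_
  have hg_eq := eq_mk_of_left_map_eq_one hθH hθK hα hα' (g := g) (by simp [hg])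
  have hΔ1 : detK αi β γ δ 1 = 1 :=
    mul_eq_left.mp (by rw [← detK_mul hθH hθK hα hα', one_mul])
  have hright : g.right = 1 := hΔ <| by
    rw [hΔ1, ← right_inr (φ := f) (detK αi β γ δ g.right),
      ← map_mk_inv_eq_inr_detK hθH hθK hα', ← hg_eq, hg, one_right]
  rw [hg_eq, hright]
  exact mul_eq_left.mp (by rw [mk_inv_mul_mk_inv hθH hθK hα hα', one_mul])

theorem map_mk_mul_inv (hθH : ∀ h : H, θ ⟨h, 1⟩ = ⟨α h, γ h⟩)
    (hθK : ∀ k : K, θ ⟨1, k⟩ = ⟨β k, δ k⟩) (hα' : Function.RightInverse αi α)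
    {Δi : K → K} (hΔ' : Function.RightInverse Δi (detK αi β γ δ)) (h : H) :
    θ ⟨αi h * (αi (β (Δi ((γ (αi h))⁻¹))))⁻¹, Δi ((γ (αi h))⁻¹)⟩ = ⟨h, 1⟩ := by
  have hsplit : (⟨αi h * (αi (β (Δi ((γ (αi h))⁻¹))))⁻¹, Δi ((γ (αi h))⁻¹)⟩ : H ⋊[f] K) =
      ⟨αi h, 1⟩ * ⟨(αi (β (Δi ((γ (αi h))⁻¹))))⁻¹, Δi ((γ (αi h))⁻¹)⟩ := by
    ext <;> simp
  rw [hsplit, map_mul, map_mk_inv_eq_inr_detK hθH hθK hα', hΔ', hθH, hα']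
  ext <;> simp

end SemidirectProduct

open SemidirectProduct in
/-- Let `θ` be an endomorphism of `G = H ⋊[f] K` with matrix
`(α, β, γ, δ)` such that `α` is bijective (with two-sided inverse `αi`) and the
`K`-determinant `Δ k = (γ (αi (β k)))⁻¹ * δ k` is bijective (with two-sided inverse
`Δi`).  Then `θ` is bijective, its inverse has the stated matrix, and `Δ` is a
group homomorphism. -/
theorem bijective_of_detK_bijective
    {H K : Type*} [Group H] [Group K] (f : K →* MulAut H)
    (θ : (H ⋊[f] K) →* (H ⋊[f] K))
    (α : H → H) (β : K → H) (γ : H → K) (δ : K → K)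
    (hθH : ∀ h : H, θ ⟨h, 1⟩ = ⟨α h, γ h⟩)
    (hθK : ∀ k : K, θ ⟨1, k⟩ = ⟨β k, δ k⟩)
    (αi : H → H)
    (hαi : Function.LeftInverse αi α) (hαi' : Function.RightInverse αi α)
    (Δi : K → K)
    (hΔi : Function.LeftInverse Δi (fun k : K => (γ (αi (β k)))⁻¹ * δ k))
    (hΔi' : Function.RightInverse Δi (fun k : K => (γ (αi (β k)))⁻¹ * δ k)) :
    Function.Bijective θ ∧
    (∀ h : H, Function.invFun θ (⟨h, 1⟩ : H ⋊[f] K) =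
      ⟨αi h * (αi (β (Δi ((γ (αi h))⁻¹))))⁻¹, Δi ((γ (αi h))⁻¹)⟩) ∧
    (∀ k : K, Function.invFun θ (⟨1, k⟩ : H ⋊[f] K) =
      ⟨(αi (β (Δi k)))⁻¹, Δi k⟩) ∧
    (∀ k k' : K, (γ (αi (β (k * k'))))⁻¹ * δ (k * k') =
      ((γ (αi (β k)))⁻¹ * δ k) * ((γ (αi (β k')))⁻¹ * δ k')) := by
  have hθ_inl := map_mk_mul_inv hθH hθK hαi' hΔi'
  have hθ_inr (k : K) : θ ⟨(αi (β (Δi k)))⁻¹, Δi k⟩ = ⟨1, k⟩ :=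
    (map_mk_inv_eq_inr_detK hθH hθK hαi' _).trans (congrArg inr (hΔi' k))
  have hinj := injective_of_detK_injective hθH hθK hαi hαi' hΔi.injective
  have hsurj : Function.Surjective θ := by
    rintro ⟨h, k⟩
    rw [show (⟨h, k⟩ : H ⋊[f] K) = ⟨h, 1⟩ * ⟨1, k⟩ by ext <;> simp]
    exact θ.range.mul_mem ⟨_, hθ_inl h⟩ ⟨_, hθ_inr k⟩
  refine ⟨⟨hinj, hsurj⟩, fun h => ?_, fun k => ?_, detK_mul hθH hθK hαi hαi'⟩
  · rw [← hθ_inl h]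
    exact Function.leftInverse_invFun hinj _
  · rw [← hθ_inr k]
    exact Function.leftInverse_invFun hinj _
end

section
/- Let θ be an endomorphism of G with matrix (α, β, γ, δ) such that δ is bijective and Δ := det_H(θ) is bijective, so that θ is bijective and θ⁻¹ is an endomorphism of G whose matrix (α', β', γ', δ') has α' = Δ⁻¹ bijective. Then the K-determinant of θ⁻¹ equals δ⁻¹; that is, (γ'(Δ(β'(k))))⁻¹ · δ'(k) = δ⁻¹(k) for all k ∈ K. -/
/-!
The `K`-component of `θ ⟨h, k⟩` is `γ h * δ k`, and `δ` is multiplicative. Evaluating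
`θ ∘ θ' = id` at `⟨1, k⟩` gives `γ (β' k) * δ (δ' k) = k`. Since `θ` maps
`⟨h, (δ⁻¹ (γ h))⁻¹⟩` to `⟨Δ h, 1⟩`, we get `γ' (Δ h) = (δ⁻¹ (γ h))⁻¹`; with `h = β' k`,
applying `δ` to the claimed identity reduces it to the previous one.
-/

namespace SemidirectProduct

variable {N G : Type*} [Group N] [Group G] {φ : G →* MulAut N}

theorem mk_mul_mk_inv_same_right (a b : N) (g : G) :
    (⟨a, g⟩ * ⟨b, g⟩⁻¹ : N ⋊[φ] G) = ⟨a * b⁻¹, 1⟩ := by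
  ext <;> simp [mul_left, inv_left]

variable {N' G' : Type*} [Group N'] [Group G'] {φ' : G' →* MulAut N'}

theorem right_map_mk (θ : N ⋊[φ] G →* N' ⋊[φ'] G') (n : N) (g : G) :
    (θ ⟨n, g⟩).right = (θ ⟨n, 1⟩).right * (θ ⟨1, g⟩).right := by
  rw [mk_eq_inl_mul_inr, map_mul, mul_right]
  rfl

theorem right_map_mk_one_mul (θ : N ⋊[φ] G →* N' ⋊[φ'] G') (g₁ g₂ : G) :
    (θ ⟨1, g₁ * g₂⟩).right = (θ ⟨1, g₁⟩).right * (θ ⟨1, g₂⟩).right :=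
  congrArg right (map_mul (θ.comp inr) g₁ g₂)

end SemidirectProduct

open SemidirectProduct

theorem detK_of_inverse_general
    {H K : Type*} [Group H] [Group K] (f : K →* MulAut H)
    (θ θ' : (H ⋊[f] K) →* (H ⋊[f] K))
    (hinv : Function.LeftInverse θ' θ) (hinv' : Function.RightInverse θ' θ)
    (α : H → H) (β : K → H) (γ : H → K) (δ : K → K)
    (hθH : ∀ h : H, θ ⟨h, 1⟩ = ⟨α h, γ h⟩)
    (hθK : ∀ k : K, θ ⟨1, k⟩ = ⟨β k, δ k⟩)
    (α' : H → H) (β' : K → H) (γ' : H → K) (δ' : K → K)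
    (hθ'H : ∀ h : H, θ' ⟨h, 1⟩ = ⟨α' h, γ' h⟩)
    (hθ'K : ∀ k : K, θ' ⟨1, k⟩ = ⟨β' k, δ' k⟩)
    (δi : K → K)
    (hδi : Function.LeftInverse δi δ) (hδi' : Function.RightInverse δi δ) :
    ∀ k : K, (γ' (α (β' k) * (β (δi (γ (β' k))))⁻¹))⁻¹ * δ' k = δi k := by
  intro k
  set h := β' k
  set d := δi (γ h)
  have hδ_mul : ∀ a b, δ (a * b) = δ a * δ b := fun a b => by
    simpa only [hθK] using right_map_mk_one_mul θ a b
  have hK : γ h * δ (δ' k) = k := by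
    simpa only [hθ'K, right_map_mk θ, hθH, hθK] using congrArg right (hinv' ⟨1, k⟩)
  have hθ_preimage : θ (⟨h, 1⟩ * ⟨1, d⟩⁻¹) = ⟨α h * (β d)⁻¹, 1⟩ := by
    rw [map_mul, map_inv, hθH, hθK, hδi', mk_mul_mk_inv_same_right]
  have hγ' : γ' (α h * (β d)⁻¹) = d⁻¹ := by
    have h_back := congrArg right (hinv (⟨h, 1⟩ * ⟨1, d⟩⁻¹))
    rw [hθ_preimage, hθ'H] at h_back
    simpa using h_back
  rw [hγ', inv_inv]
  apply hδi.injective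
  rw [hδ_mul, hδi', hK, hδi']

/-- Let `θ` be an endomorphism of `G = H ⋊[f] K` with matrix
`(α, β, γ, δ)` such that `δ` is bijective (with two-sided inverse `δi`) and the
`H`-determinant `Δ h = α h * (β (δi (γ h)))⁻¹` is bijective, so that `θ` is
bijective with inverse the endomorphism `θ'` whose matrix is `(α', β', γ', δ')`
(and `α' = Δ⁻¹` is bijective).  Then the `K`-determinant of `θ'` equals `δ⁻¹`:
`(γ' (Δ (β' k)))⁻¹ * δ' k = δi k` for all `k`. -/
theorem detK_of_inverse
    {H K : Type*} [Group H] [Group K] (f : K →* MulAut H)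
    (θ θ' : (H ⋊[f] K) →* (H ⋊[f] K))
    (hinv : Function.LeftInverse θ' θ) (hinv' : Function.RightInverse θ' θ)
    (α : H → H) (β : K → H) (γ : H → K) (δ : K → K)
    (hθH : ∀ h : H, θ ⟨h, 1⟩ = ⟨α h, γ h⟩)
    (hθK : ∀ k : K, θ ⟨1, k⟩ = ⟨β k, δ k⟩)
    (α' : H → H) (β' : K → H) (γ' : H → K) (δ' : K → K)
    (hθ'H : ∀ h : H, θ' ⟨h, 1⟩ = ⟨α' h, γ' h⟩)
    (hθ'K : ∀ k : K, θ' ⟨1, k⟩ = ⟨β' k, δ' k⟩)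
    (δi : K → K)
    (hδi : Function.LeftInverse δi δ) (hδi' : Function.RightInverse δi δ)
    (hΔ : Function.Bijective (fun h : H => α h * (β (δi (γ h)))⁻¹)) :
    ∀ k : K, (γ' (α (β' k) * (β (δi (γ (β' k))))⁻¹))⁻¹ * δ' k = δi k :=
  detK_of_inverse_general f θ θ' hinv hinv' α β γ δ hθH hθK α' β' γ' δ' hθ'H hθ'K δi hδi hδi'
end

section
/- Let θ be an endomorphism of G with matrix (α, β, γ, δ) such that α is bijective. Then θ is bijective if and only if det_K(θ) is bijective. -/
/-!
Writing `x = h · α⁻¹(β k)`, the homomorphism property gives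
`θ (h, k) = (α x, γ x · det_K(θ)(k))`. So `θ` is the shear `(h, k) ↦ (x, k)`, which is a
bijection, followed by the map `(x, k) ↦ (α x, γ x · det_K(θ)(k))`, which sends the fibre over
`x` to the fibre over `α x` by a left translate of `det_K(θ)`. With `α` bijective, the latter
is bijective exactly when `det_K(θ)` is.
-/

open Function

theorem bijective_fiberwise_iff {α β γ δ : Type*} {f : α → γ} (hf : Bijective f)
    (g : α → β → δ) :
    Bijective (fun p : α × β => (f p.1, g p.1 p.2)) ↔ ∀ a, Bijective (g a) := by
  constructor
  · intro hF a
    refine ⟨fun b b' hb => ?_, fun c => ?_⟩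
    · exact congrArg Prod.snd (@hF.1 (a, b) (a, b') (by simp only [hb]))
    · obtain ⟨⟨a', b⟩, hab⟩ := hF.2 (f a, c)
      obtain ⟨hfa, hgc⟩ := Prod.mk.inj hab
      obtain rfl : a' = a := hf.1 hfa
      exact ⟨b, hgc⟩
  · intro hg
    exact (Equiv.prodShear (Equiv.ofBijective f hf) fun a =>
      Equiv.ofBijective (g a) (hg a)).bijective

namespace SemidirectProduct

variable {H K : Type*} [Group H] [Group K] {f : K →* MulAut H}

def shear (u : K → H) : H ⋊[f] K ≃ H × K where
  toFun g := (g.left * u g.right, g.right)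
  invFun p := ⟨p.1 * (u p.2)⁻¹, p.2⟩
  left_inv g := by ext <;> simp
  right_inv p := by simp

theorem apply_eq_of_matrix (θ : H ⋊[f] K →* H ⋊[f] K) {α : H → H} {β : K → H} {γ : H → K}
    {δ : K → K} {αi : H → H} (hθH : ∀ h, θ ⟨h, 1⟩ = ⟨α h, γ h⟩)
    (hθK : ∀ k, θ ⟨1, k⟩ = ⟨β k, δ k⟩) (hαi : RightInverse αi α) (g : H ⋊[f] K) :
    θ g = ⟨α (g.left * αi (β g.right)),
      γ (g.left * αi (β g.right)) * ((γ (αi (β g.right)))⁻¹ * δ g.right)⟩ := by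
  obtain ⟨h, k⟩ := g
  set x := αi (β k)
  have hθk : θ ⟨1, k⟩ = θ ⟨x, 1⟩ * ⟨1, (γ x)⁻¹ * δ k⟩ := by
    rw [hθK, hθH, hαi (β k)]
    ext <;> simp
  calc θ ⟨h, k⟩ = θ ⟨h, 1⟩ * θ ⟨x, 1⟩ * ⟨1, (γ x)⁻¹ * δ k⟩ := by
        rw [mul_assoc, ← hθk, ← map_mul]
        congr 1
        ext <;> simp
    _ = θ ⟨h * x, 1⟩ * ⟨1, (γ x)⁻¹ * δ k⟩ := by
        rw [← map_mul]
        congr 1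
        ext <;> simp
    _ = _ := by
        rw [hθH]
        ext <;> simp

end SemidirectProduct

open SemidirectProduct in
/-- Let `θ` be an endomorphism of `G = H ⋊[f] K` with matrix
`(α, β, γ, δ)` such that `α` is bijective (with two-sided inverse `αi`).  Then `θ`
is bijective if and only if the `K`-determinant `det_K θ : k ↦ (γ (αi (β k)))⁻¹ * δ k`
is bijective. -/
theorem bijective_iff_detK_bijective
    {H K : Type*} [Group H] [Group K] (f : K →* MulAut H)
    (θ : (H ⋊[f] K) →* (H ⋊[f] K))
    (α : H → H) (β : K → H) (γ : H → K) (δ : K → K)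
    (hθH : ∀ h : H, θ ⟨h, 1⟩ = ⟨α h, γ h⟩)
    (hθK : ∀ k : K, θ ⟨1, k⟩ = ⟨β k, δ k⟩)
    (αi : H → H)
    (hαi : Function.LeftInverse αi α) (hαi' : Function.RightInverse αi α) :
    Function.Bijective θ ↔
      Function.Bijective (fun k : K => (γ (αi (β k)))⁻¹ * δ k) := by
  set d : K → K := fun k => (γ (αi (β k)))⁻¹ * δ k
  have hθ : ⇑θ = equivProd.symm ∘ (fun p : H × K => (α p.1, γ p.1 * d p.2)) ∘ shear (αi ∘ β) :=
    funext (apply_eq_of_matrix θ hθH hθK hαi')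
  rw [hθ, Equiv.comp_bijective, Equiv.bijective_comp,
    bijective_fiberwise_iff ⟨hαi.injective, hαi'.surjective⟩ fun x k => γ x * d k]
  exact ⟨fun h => ((Group.mulLeft_bijective _).of_comp_iff' d).1 (h 1),
    fun hd x => (Group.mulLeft_bijective _).comp hd⟩
end

section
/- Let θ be an endomorphism of G with matrix (α, β, γ, δ) such that δ is bijective. Then θ is bijective if and only if det_H(θ) is bijective. -/
/-!
Writing `c = γ h * δ k`, the map `k ↦ δ k` is multiplicative and `β` is a crossed homomorphism
twisted by `δ`, so the `H`-coordinate of `θ (h, k)` is `det_H θ h * β (δ⁻¹ c)`. Hence in the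
coordinates `(h, k) ↦ (h, c)`, which are bijective because `δ` is, `θ` is `det_H θ` on the first
factor followed by a shear of `H × K`, and shears are bijections.
-/

open Function SemidirectProduct

theorem Function.bijective_shear_iff {X Y G : Type*} [Nonempty X] [Nonempty Y] [Group G]
    (D : X → G) (B : Y → G) (c : X → Y → Y) (hc : ∀ x, Bijective (c x)) :
    Bijective (fun p : X × Y => (D p.1 * B (c p.1 p.2), c p.1 p.2)) ↔ Bijective D := by
  let Q : X × Y ≃ X × Y := Equiv.prodShear (Equiv.refl X) fun x => Equiv.ofBijective _ (hc x)
  let M : G × Y ≃ G × Y :=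
    { toFun := fun p => (p.1 * B p.2, p.2)
      invFun := fun p => (p.1 * (B p.2)⁻¹, p.2)
      left_inv := fun p => by simp
      right_inv := fun p => by simp }
  have hfactor : (fun p : X × Y => (D p.1 * B (c p.1 p.2), c p.1 p.2)) = M ∘ Prod.map D id ∘ Q :=
    rfl
  rw [hfactor, Equiv.comp_bijective, Equiv.bijective_comp, Prod.map_bijective]
  exact and_iff_left bijective_id

section Matrix

variable {H K : Type*} [Group H] [Group K] {f : K →* MulAut H} (θ : (H ⋊[f] K) →* (H ⋊[f] K))
  {α : H → H} {β : K → H} {γ : H → K} {δ : K → K}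

theorem SemidirectProduct.crossedHom_and_map_mul_of_matrix
    (hθK : ∀ k : K, θ ⟨1, k⟩ = ⟨β k, δ k⟩) (k₁ k₂ : K) :
    β (k₁ * k₂) = β k₁ * f (δ k₁) (β k₂) ∧ δ (k₁ * k₂) = δ k₁ * δ k₂ := by
  have hmul : θ ⟨1, k₁ * k₂⟩ = θ ⟨1, k₁⟩ * θ ⟨1, k₂⟩ :=
    (congrArg θ (map_mul inr k₁ k₂)).trans (map_mul θ _ _)
  rw [hθK, hθK, hθK] at hmul
  exact SemidirectProduct.ext_iff.mp hmul

theorem SemidirectProduct.apply_mk_of_matrix (hθH : ∀ h : H, θ ⟨h, 1⟩ = ⟨α h, γ h⟩)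
    (hθK : ∀ k : K, θ ⟨1, k⟩ = ⟨β k, δ k⟩) (h : H) (k : K) :
    θ ⟨h, k⟩ = ⟨α h * f (γ h) (β k), γ h * δ k⟩ := by
  rw [mk_eq_inl_mul_inr, map_mul]
  exact congrArg₂ (· * ·) (hθH h) (hθK k)

theorem SemidirectProduct.apply_mk_eq_detH_mul (hθH : ∀ h : H, θ ⟨h, 1⟩ = ⟨α h, γ h⟩)
    (hθK : ∀ k : K, θ ⟨1, k⟩ = ⟨β k, δ k⟩) {δi : K → K} (hδi : LeftInverse δi δ)
    (hδi' : RightInverse δi δ) (h : H) (k : K) :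
    θ ⟨h, k⟩ = ⟨(α h * (β (δi (γ h)))⁻¹) * β (δi (γ h * δ k)), γ h * δ k⟩ := by
  obtain ⟨hβmul, hδmul⟩ := crossedHom_and_map_mul_of_matrix θ hθK (δi (γ h)) k
  have hδi_mul : δi (γ h * δ k) = δi (γ h) * k := by
    apply hδi.injective
    rw [hδi', hδmul, hδi']
  have hβ : β (δi (γ h) * k) = β (δi (γ h)) * f (γ h) (β k) := by
    rw [hβmul, hδi']
  rw [apply_mk_of_matrix θ hθH hθK, hδi_mul, hβ, mul_assoc, inv_mul_cancel_left]

end Matrix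

/-- Let `θ` be an endomorphism of `G = H ⋊[f] K` with matrix
`(α, β, γ, δ)` such that `δ` is bijective (with two-sided inverse `δi`).  Then `θ`
is bijective if and only if the `H`-determinant `det_H θ : h ↦ α h * (β (δi (γ h)))⁻¹`
is bijective. -/
theorem bijective_iff_detH_bijective
    {H K : Type*} [Group H] [Group K] (f : K →* MulAut H)
    (θ : (H ⋊[f] K) →* (H ⋊[f] K))
    (α : H → H) (β : K → H) (γ : H → K) (δ : K → K)
    (hθH : ∀ h : H, θ ⟨h, 1⟩ = ⟨α h, γ h⟩)
    (hθK : ∀ k : K, θ ⟨1, k⟩ = ⟨β k, δ k⟩)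
    (δi : K → K)
    (hδi : Function.LeftInverse δi δ) (hδi' : Function.RightInverse δi δ) :
    Function.Bijective θ ↔
      Function.Bijective (fun h : H => α h * (β (δi (γ h)))⁻¹) := by
  let c : H → K → K := fun h k => γ h * δ k
  have hc : ∀ h, Bijective (c h) := fun h =>
    (Equiv.mulLeft (γ h)).bijective.comp ⟨hδi.injective, hδi'.surjective⟩
  have hθ : ⇑θ = equivProd.symm ∘
      (fun p : H × K => (α p.1 * (β (δi (γ p.1)))⁻¹ * β (δi (c p.1 p.2)), c p.1 p.2)) ∘
      equivProd := by
    funext ⟨h, k⟩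
    exact apply_mk_eq_detH_mul θ hθH hθK hδi hδi' h k
  rw [hθ, Equiv.comp_bijective, Equiv.bijective_comp]
  exact bijective_shear_iff (fun h => α h * (β (δi (γ h)))⁻¹) (fun k => β (δi k)) c hc
end

section
/- Let θ be an endomorphism of G satisfying θ(h,1) = (h, γ(h)) for all h ∈ H and θ(1,k) = (β(k), k) for all k ∈ K, where β : K → H and γ : H → K. Then β(k) lies in the center Z(H) of H for every k ∈ K. -/
/-!
Comparing the `H`-components of the images under `θ` of `(h, 1) (h', 1) = (h h', 1)` shows that
every `γ h` acts trivially on `H`. Then applying `θ` to `(1, k) (n, 1) = (f_k n, 1) (1, k)` and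
comparing `H`-components gives `β k · f_k n = f_k n · β k`, and `f_k n` ranges over all of `H`.
-/

namespace SemidirectProduct

variable {N G : Type*} [Group N] [Group G] {φ : G →* MulAut N}

theorem inr_mul_inl (g : G) (n : N) : (inr g * inl n : N ⋊[φ] G) = inl (φ g n) * inr g := by
  ext <;> simp

theorem apply_right_eq_self_of_left_eq {ψ : N →* N ⋊[φ] G} (hψ : ∀ n, (ψ n).left = n)
    (n n' : N) : φ (ψ n).right n' = n' := by
  have h := congrArg left (map_mul ψ n n')
  rw [mul_left, hψ, hψ, hψ] at h
  exact (mul_left_cancel h).symm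

end SemidirectProduct

/-- Let `θ` be an endomorphism of `G = H ⋊[f] K` with
`θ (h, 1) = (h, γ h)` and `θ (1, k) = (β k, k)`.  Then `β` takes values in the
center of `H`. -/
theorem beta_mem_center
    {H K : Type*} [Group H] [Group K] (f : K →* MulAut H)
    (θ : (H ⋊[f] K) →* (H ⋊[f] K))
    (β : K → H) (γ : H → K)
    (hθH : ∀ h : H, θ ⟨h, 1⟩ = ⟨h, γ h⟩)
    (hθK : ∀ k : K, θ ⟨1, k⟩ = ⟨β k, k⟩) :
    ∀ k : K, β k ∈ Subgroup.center H := by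
  intro k
  have hθinl (h : H) : θ (SemidirectProduct.inl h) = ⟨h, γ h⟩ := hθH h
  have hθinr : θ (SemidirectProduct.inr k) = ⟨β k, k⟩ := hθK k
  have hγ (h h' : H) : f (γ h) h' = h' := by
    simpa [hθinl] using SemidirectProduct.apply_right_eq_self_of_left_eq
      (ψ := θ.comp SemidirectProduct.inl) (fun h ↦ by simp [hθinl]) h h'
  rw [Subgroup.mem_center_iff]
  intro h
  obtain ⟨n, rfl⟩ := (f k).surjective h
  have hcomm := congrArg (fun x ↦ (θ x).left) (SemidirectProduct.inr_mul_inl (φ := f) k n)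
  simp only [map_mul, hθinl, hθinr, SemidirectProduct.mul_left, hγ] at hcomm
  exact hcomm.symm
end

section
/- Let θ be an endomorphism of G satisfying θ(h,1) = (h, γ(h)) for all h ∈ H and θ(1,k) = (β(k), k) for all k ∈ K, where β : K → H and γ : H → K. Then the composite map h ↦ β(γ(h)) is a group endomorphism of H: β(γ(h·h')) = β(γ(h)) · β(γ(h')) for all h, h' ∈ H. -/
/-!
The restriction of `θ` to `H` has the form `h ↦ (h, γ h)`; multiplicativity forces `γ` to be a
homomorphism whose image acts trivially on `H`. The restriction to `K` has the form
`k ↦ (β k, k)`, which makes `β` a crossed homomorphism: `β (k k') = β k · f_k (β k')`. On the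
image of `γ` the twist `f_k` is the identity, so `β ∘ γ` is multiplicative.
-/

namespace SemidirectProduct

variable {N G : Type*} [Group N] [Group G] {φ : G →* MulAut N}

section Graph

variable {ψ : N →* N ⋊[φ] G} {γ : N → G} (hψ : ∀ n, ψ n = ⟨n, γ n⟩)
include hψ

theorem mk_eq_of_map_eq_mk_left (n n' : N) :
    (⟨n * n', γ (n * n')⟩ : N ⋊[φ] G) = ⟨n * φ (γ n) n', γ n * γ n'⟩ := by
  rw [← hψ, map_mul, hψ, hψ]
  rfl

theorem apply_eq_self_of_map_eq_mk_left (n n' : N) : φ (γ n) n' = n' :=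
  (mul_left_cancel (congrArg left (mk_eq_of_map_eq_mk_left hψ n n'))).symm

theorem map_mul_of_map_eq_mk_left (n n' : N) : γ (n * n') = γ n * γ n' :=
  congrArg right (mk_eq_of_map_eq_mk_left hψ n n')

end Graph

theorem map_mul_of_map_eq_mk_right {ψ : G →* N ⋊[φ] G} {β : G → N}
    (hψ : ∀ g, ψ g = ⟨β g, g⟩) (g g' : G) : β (g * g') = β g * φ g (β g') := by
  have h := congrArg left (hψ (g * g'))
  rw [map_mul, hψ, hψ] at h
  exact h.symm

end SemidirectProduct

open SemidirectProduct in
/-- Let `θ` be an endomorphism of `G = H ⋊[f] K` with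
`θ (h, 1) = (h, γ h)` and `θ (1, k) = (β k, k)`.  Then `β ∘ γ` is a group
endomorphism of `H`. -/
theorem betaGamma_hom
    {H K : Type*} [Group H] [Group K] (f : K →* MulAut H)
    (θ : (H ⋊[f] K) →* (H ⋊[f] K))
    (β : K → H) (γ : H → K)
    (hθH : ∀ h : H, θ ⟨h, 1⟩ = ⟨h, γ h⟩)
    (hθK : ∀ k : K, θ ⟨1, k⟩ = ⟨β k, k⟩) :
    ∀ h h' : H, β (γ (h * h')) = β (γ h) * β (γ h') := by
  have hγ : ∀ h, (θ.comp inl) h = ⟨h, γ h⟩ := hθH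
  have hβ : ∀ k, (θ.comp inr) k = ⟨β k, k⟩ := hθK
  intro h h'
  rw [map_mul_of_map_eq_mk_left hγ, map_mul_of_map_eq_mk_right hβ,
    apply_eq_self_of_map_eq_mk_left hγ]
end

section
/- Let θ be an endomorphism of G satisfying θ(h,1) = (h, γ(h)) for all h ∈ H and θ(1,k) = (β(k), k) for all k ∈ K, where β : K → H and γ : H → K. Then the composite h ↦ β(γ(h)) is equivariant for the action of K: β(γ(f_k(h))) = f_k(β(γ(h))) for all h ∈ H and k ∈ K. -/
/-!
Restricted to `K`, the endomorphism `θ` is a section `k ↦ (β k, k)`, so `β` is a crossed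
homomorphism; restricted to `H` it is `h ↦ (h, γ h)`, which forces every `f (γ h)` to be trivial.
Applying `θ` to the relation `(f k h, 1) (1, k) = (1, k) (h, 1)` shows that `β k` is central
and that `γ (f k h) = k γ(h) k⁻¹`. The crossed homomorphism rule then gives
`β (k γ(h) k⁻¹) = β k · f k (β (γ h)) · (β k)⁻¹ = f k (β (γ h))`.
-/

open SemidirectProduct

section

variable {H K : Type*} [Group H] [Group K] {f : K →* MulAut H}

section CrossedHom

variable (φ : K →* H ⋊[f] K) {β : K → H} (hφ : ∀ k, φ k = ⟨β k, k⟩)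
include hφ

theorem section_left_mul (k₁ k₂ : K) : β (k₁ * k₂) = β k₁ * f k₁ (β k₂) := by
  simpa [hφ] using congrArg SemidirectProduct.left (map_mul φ k₁ k₂)

theorem section_left_one : β 1 = 1 := by
  simpa [hφ] using congrArg SemidirectProduct.left (map_one φ)

theorem map_section_left_inv (k : K) : f k (β k⁻¹) = (β k)⁻¹ := by
  rw [eq_comm, inv_eq_iff_mul_eq_one, ← section_left_mul φ hφ, mul_inv_cancel, section_left_one φ hφ]

theorem section_left_conj {k k' : K} (hk : ∀ x, Commute (β k) x) (hk' : f k' = 1) :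
    β (k * k' * k⁻¹) = f k (β k') := by
  rw [mul_assoc, section_left_mul φ hφ, section_left_mul φ hφ, hk', MulAut.one_apply, map_mul,
    map_section_left_inv φ hφ, ← mul_assoc, (hk _).eq, mul_inv_cancel_right]

end CrossedHom

theorem aut_eq_one_of_graph (ψ : H →* H ⋊[f] K) {γ : H → K} (hψ : ∀ h, ψ h = ⟨h, γ h⟩)
    (h : H) : f (γ h) = 1 := by
  ext x
  simpa [hψ] using (congrArg SemidirectProduct.left (map_mul ψ h x)).symm

section Endomorphism

variable (θ : (H ⋊[f] K) →* (H ⋊[f] K)) {β : K → H} {γ : H → K}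
  (hθH : ∀ h : H, θ (inl h) = ⟨h, γ h⟩) (hθK : ∀ k : K, θ (inr k) = ⟨β k, k⟩)
include hθH hθK

theorem map_inl_aut_mul_inr (k : K) (h : H) :
    (⟨f k h * β k, γ (f k h) * k⟩ : H ⋊[f] K) = ⟨β k * f k h, k * γ h⟩ := by
  have hrel : inl (f k h) * inr k = (inr k * inl h : H ⋊[f] K) := by
    rw [inl_aut, map_inv, inv_mul_cancel_right]
  have := congrArg θ hrel
  rw [map_mul, map_mul, hθH, hθK, hθH] at this
  have htriv := aut_eq_one_of_graph (θ.comp inl) hθH (f k h)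
  ext
  · simpa [htriv] using congrArg SemidirectProduct.left this
  · simpa using congrArg SemidirectProduct.right this

theorem commute_section_left (k : K) (x : H) : Commute (β k) x := by
  obtain ⟨h, rfl⟩ := (f k).surjective x
  exact (congrArg SemidirectProduct.left (map_inl_aut_mul_inr θ hθH hθK k h)).symm

theorem graph_right_aut_apply (k : K) (h : H) : γ (f k h) = k * γ h * k⁻¹ :=
  eq_mul_inv_of_mul_eq (congrArg SemidirectProduct.right (map_inl_aut_mul_inr θ hθH hθK k h))

end Endomorphism

end

/-- Let `θ` be an endomorphism of `G = H ⋊[f] K` with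
`θ (h, 1) = (h, γ h)` and `θ (1, k) = (β k, k)`.  Then `β ∘ γ` is equivariant
for the action of `K` on `H`: `β (γ (f k h)) = f k (β (γ h))`. -/
theorem betaGamma_equivariant
    {H K : Type*} [Group H] [Group K] (f : K →* MulAut H)
    (θ : (H ⋊[f] K) →* (H ⋊[f] K))
    (β : K → H) (γ : H → K)
    (hθH : ∀ h : H, θ ⟨h, 1⟩ = ⟨h, γ h⟩)
    (hθK : ∀ k : K, θ ⟨1, k⟩ = ⟨β k, k⟩) :
    ∀ (h : H) (k : K), β (γ (f k h)) = f k (β (γ h)) := by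
  intro h k
  rw [graph_right_aut_apply θ hθH hθK]
  exact section_left_conj (θ.comp inr) hθK (commute_section_left θ hθH hθK k)
    (aut_eq_one_of_graph (θ.comp inl) hθH h)
end

section
/- Let θ be a bijective endomorphism (automorphism) of G satisfying θ(h,1) = (h, γ(h)) for all h ∈ H and θ(1,k) = (β(k), k) for all k ∈ K, where β : K → H and γ : H → K. Then the map η : H → H defined by η(h) = h · (β(γ(h)))⁻¹ is a bijective group homomorphism of H, and it is equivariant for the action of K: η(f_k(h)) = f_k(η(h)) for all h ∈ H and k ∈ K. -/
/-!
Applying `θ` to the identities `⟨h, 1⟩ * ⟨h', 1⟩ = ⟨h * h', 1⟩`, `⟨1, k⟩ * ⟨1, k'⟩ = ⟨1, k * k'⟩`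
and `⟨1, k⟩ * ⟨h, 1⟩ = ⟨f k h, 1⟩ * ⟨1, k⟩` shows that `γ` is a homomorphism into the kernel
of `f`, that `β` is a crossed homomorphism with central image, and that
`γ (f k h) = k * γ h * k⁻¹`. Hence `β ∘ γ` is a homomorphism into the centre of `H`, which
makes `η = id * (β ∘ γ)⁻¹` a homomorphism, `K`-equivariant by the conjugation rule for `γ`.
If `η h = 1` then `θ ⟨h, 1⟩ = θ ⟨1, γ h⟩`, so `η` is injective because `θ` is; and
`θ ⟨h, k⟩ = ⟨h * β k, γ h * k⟩` lands in `H × {1}` exactly when `k = (γ h)⁻¹`, where its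
first component is `η h`, so `η` is surjective because `θ` is.
-/

theorem mul_inv_map_mul_of_mem_center {G : Type*} [Group G] {φ : G → G}
    (hφ : ∀ a b, φ (a * b) = φ a * φ b) (hcenter : ∀ a, φ a ∈ Subgroup.center G) (a b : G) :
    a * b * (φ (a * b))⁻¹ = a * (φ a)⁻¹ * (b * (φ b)⁻¹) := by
  have hcomm := Subgroup.mem_center_iff.1 (inv_mem (hcenter a)) (b * (φ b)⁻¹)
  rw [hφ, mul_inv_rev, mul_assoc a, mul_assoc a, ← mul_assoc b, hcomm]

namespace SemidirectProduct

variable {H K : Type*} [Group H] [Group K] {f : K →* MulAut H}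
  {θ : H ⋊[f] K →* H ⋊[f] K} {β : K → H} {γ : H → K}

theorem mk_mul_gamma_mul_eq (hθH : ∀ h : H, θ ⟨h, 1⟩ = ⟨h, γ h⟩) (h h' : H) :
    (⟨h * h', γ (h * h')⟩ : H ⋊[f] K) = ⟨h * f (γ h) h', γ h * γ h'⟩ := by
  have e : (⟨h, 1⟩ * ⟨h', 1⟩ : H ⋊[f] K) = ⟨h * h', 1⟩ := by ext <;> simp
  rw [← hθH, ← e, map_mul, hθH, hθH, mul_def]

theorem f_gamma_eq_one (hθH : ∀ h : H, θ ⟨h, 1⟩ = ⟨h, γ h⟩) (h : H) : f (γ h) = 1 := by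
  ext a
  exact (mul_left_cancel (congrArg left (mk_mul_gamma_mul_eq hθH h a))).symm

theorem gamma_mul (hθH : ∀ h : H, θ ⟨h, 1⟩ = ⟨h, γ h⟩) (h h' : H) : γ (h * h') = γ h * γ h' :=
  congrArg right (mk_mul_gamma_mul_eq hθH h h')

theorem beta_mul (hθK : ∀ k : K, θ ⟨1, k⟩ = ⟨β k, k⟩) (k k' : K) :
    β (k * k') = β k * f k (β k') := by
  have e : (⟨1, k⟩ * ⟨1, k'⟩ : H ⋊[f] K) = ⟨1, k * k'⟩ := by ext <;> simp
  have := congrArg left (map_mul θ ⟨1, k⟩ ⟨1, k'⟩)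
  rwa [e, hθK, hθK, hθK] at this

theorem beta_one (hθK : ∀ k : K, θ ⟨1, k⟩ = ⟨β k, k⟩) : β 1 = 1 := by
  simpa using beta_mul hθK 1 1

theorem f_beta_inv (hθK : ∀ k : K, θ ⟨1, k⟩ = ⟨β k, k⟩) (k : K) : f k (β k⁻¹) = (β k)⁻¹ :=
  eq_inv_of_mul_eq_one_right (by rw [← beta_mul hθK, mul_inv_cancel, beta_one hθK])

theorem mk_beta_mul_eq (hθH : ∀ h : H, θ ⟨h, 1⟩ = ⟨h, γ h⟩)
    (hθK : ∀ k : K, θ ⟨1, k⟩ = ⟨β k, k⟩) (k : K) (h : H) :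
    (⟨β k * f k h, k * γ h⟩ : H ⋊[f] K) = ⟨f k h * β k, γ (f k h) * k⟩ := by
  have e : (⟨1, k⟩ * ⟨h, 1⟩ : H ⋊[f] K) = ⟨f k h, 1⟩ * ⟨1, k⟩ := by ext <;> simp
  have := congrArg θ e
  rw [map_mul, map_mul, hθH, hθH, hθK, mul_def, mul_def] at this
  simpa [f_gamma_eq_one hθH] using this

theorem beta_mem_center (hθH : ∀ h : H, θ ⟨h, 1⟩ = ⟨h, γ h⟩)
    (hθK : ∀ k : K, θ ⟨1, k⟩ = ⟨β k, k⟩) (k : K) : β k ∈ Subgroup.center H := by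
  refine Subgroup.mem_center_iff.2 fun a => ?_
  simpa using (congrArg left (mk_beta_mul_eq hθH hθK k ((f k).symm a))).symm

theorem gamma_f_apply (hθH : ∀ h : H, θ ⟨h, 1⟩ = ⟨h, γ h⟩)
    (hθK : ∀ k : K, θ ⟨1, k⟩ = ⟨β k, k⟩) (k : K) (h : H) : γ (f k h) = k * γ h * k⁻¹ :=
  eq_mul_inv_of_mul_eq (congrArg right (mk_beta_mul_eq hθH hθK k h)).symm

theorem map_mk (hθH : ∀ h : H, θ ⟨h, 1⟩ = ⟨h, γ h⟩)
    (hθK : ∀ k : K, θ ⟨1, k⟩ = ⟨β k, k⟩) (h : H) (k : K) :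
    θ ⟨h, k⟩ = ⟨h * β k, γ h * k⟩ := by
  have e : (⟨h, k⟩ : H ⋊[f] K) = ⟨h, 1⟩ * ⟨1, k⟩ := by ext <;> simp
  rw [e, map_mul, hθH, hθK, mul_def, f_gamma_eq_one hθH, MulAut.one_apply]

theorem beta_gamma_mul (hθH : ∀ h : H, θ ⟨h, 1⟩ = ⟨h, γ h⟩)
    (hθK : ∀ k : K, θ ⟨1, k⟩ = ⟨β k, k⟩) (h h' : H) : β (γ (h * h')) = β (γ h) * β (γ h') := by
  rw [gamma_mul hθH, beta_mul hθK, f_gamma_eq_one hθH, MulAut.one_apply]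

theorem beta_inv_gamma (hθH : ∀ h : H, θ ⟨h, 1⟩ = ⟨h, γ h⟩)
    (hθK : ∀ k : K, θ ⟨1, k⟩ = ⟨β k, k⟩) (h : H) : β (γ h)⁻¹ = (β (γ h))⁻¹ := by
  simpa [f_gamma_eq_one hθH] using f_beta_inv hθK (γ h)

theorem beta_gamma_f_apply (hθH : ∀ h : H, θ ⟨h, 1⟩ = ⟨h, γ h⟩)
    (hθK : ∀ k : K, θ ⟨1, k⟩ = ⟨β k, k⟩) (k : K) (h : H) :
    β (γ (f k h)) = f k (β (γ h)) := by
  rw [gamma_f_apply hθH hθK, beta_mul hθK, beta_mul hθK, map_mul, MulAut.mul_apply,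
    f_gamma_eq_one hθH, MulAut.one_apply, f_beta_inv hθK,
    ← Subgroup.mem_center_iff.1 (beta_mem_center hθH hθK k), mul_inv_cancel_right]

theorem eq_one_of_mul_inv_beta_gamma_eq_one (hθ : Function.Injective θ)
    (hθH : ∀ h : H, θ ⟨h, 1⟩ = ⟨h, γ h⟩) (hθK : ∀ k : K, θ ⟨1, k⟩ = ⟨β k, k⟩) {h : H}
    (hη : h * (β (γ h))⁻¹ = 1) : h = 1 := by
  have hθeq : θ ⟨h, 1⟩ = θ ⟨1, γ h⟩ := by rw [hθH, hθK, ← mul_inv_eq_one.1 hη]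
  exact congrArg left (hθ hθeq)

theorem surjective_mul_inv_beta_gamma (hθ : Function.Surjective θ)
    (hθH : ∀ h : H, θ ⟨h, 1⟩ = ⟨h, γ h⟩) (hθK : ∀ k : K, θ ⟨1, k⟩ = ⟨β k, k⟩) :
    Function.Surjective fun h : H => h * (β (γ h))⁻¹ := by
  intro a
  obtain ⟨⟨h, k⟩, hx⟩ := hθ ⟨a, 1⟩
  rw [map_mk hθH hθK] at hx
  have hk : k = (γ h)⁻¹ := eq_inv_of_mul_eq_one_right (congrArg right hx)
  refine ⟨h, ?_⟩
  dsimp only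
  rw [← beta_inv_gamma hθH hθK, ← hk]
  exact congrArg left hx

end SemidirectProduct

/-- Let `θ` be a bijective endomorphism (automorphism) of
`G = H ⋊[f] K` with `θ (h, 1) = (h, γ h)` and `θ (1, k) = (β k, k)`.  Then the map
`η : h ↦ h * (β (γ h))⁻¹` is a bijective group homomorphism of `H` and is
equivariant for the action of `K`. -/
theorem eta_bijective_hom_equivariant
    {H K : Type*} [Group H] [Group K] (f : K →* MulAut H)
    (θ : (H ⋊[f] K) →* (H ⋊[f] K))
    (hθ : Function.Bijective θ)
    (β : K → H) (γ : H → K)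
    (hθH : ∀ h : H, θ ⟨h, 1⟩ = ⟨h, γ h⟩)
    (hθK : ∀ k : K, θ ⟨1, k⟩ = ⟨β k, k⟩) :
    Function.Bijective (fun h : H => h * (β (γ h))⁻¹) ∧
    (∀ h h' : H, (h * h') * (β (γ (h * h')))⁻¹ =
      (h * (β (γ h))⁻¹) * (h' * (β (γ h'))⁻¹)) ∧
    (∀ (h : H) (k : K), f k h * (β (γ (f k h)))⁻¹ = f k (h * (β (γ h))⁻¹)) := by
  have hom := mul_inv_map_mul_of_mem_center (SemidirectProduct.beta_gamma_mul hθH hθK)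
    fun h => SemidirectProduct.beta_mem_center hθH hθK (γ h)
  refine ⟨⟨(injective_iff_map_eq_one (MonoidHom.mk' _ hom)).2
      fun _ => SemidirectProduct.eq_one_of_mul_inv_beta_gamma_eq_one hθ.1 hθH hθK,
    SemidirectProduct.surjective_mul_inv_beta_gamma hθ.2 hθH hθK⟩, hom, fun h k => ?_⟩
  rw [SemidirectProduct.beta_gamma_f_apply hθH hθK, map_mul, map_inv]
end

section
/- Let θ be a bijective endomorphism (automorphism) of G satisfying θ(h,1) = (h, γ(h)) for all h ∈ H and θ(1,k) = (β(k), k) for all k ∈ K, where β : K → H and γ : H → K, and let η : H → H, η(h) = h · (β(γ(h)))⁻¹, which is a bijective group homomorphism of H. Then the map k ↦ η⁻¹(β(k)) takes values in the center Z(H) and is a crossed homomorphism: η⁻¹(β(k·k')) = η⁻¹(β(k)) · f_k(η⁻¹(β(k'))) for all k, k' ∈ K. -/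
/-!
Comparing the components of `θ (a * b) = θ a * θ b` for `a, b` among `(h, 1)` and `(1, k)` shows
that `γ` is multiplicative with image acting trivially on `H`, that `β` is a crossed homomorphism
with central values, and that `γ (f k h) = k * γ h * k⁻¹`. Hence `β ∘ γ` is a homomorphism into
`Z(H)` commuting with every `f k`, so `η = id * (β ∘ γ)⁻¹` is an automorphism commuting with every
`f k`. Its inverse then preserves the centre and carries the crossed homomorphism `β` to a crossed
homomorphism.
-/

open SemidirectProduct Function

def IsCrossedHom {H K : Type*} [Group H] [Monoid K] (f : K →* MulAut H) (c : K → H) : Prop :=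
  ∀ k k' : K, c (k * k') = c k * f k (c k')

namespace IsCrossedHom

variable {H K : Type*} [Group H] {c : K → H}

section Monoid

variable [Monoid K] {f : K →* MulAut H}

theorem comp (hc : IsCrossedHom f c) (φ : H →* H) (hφ : ∀ k, Semiconj φ (f k) (f k)) :
    IsCrossedHom f (φ ∘ c) := by
  intro k k'
  simp only [comp_apply, hc k k', map_mul, (hφ k).eq]

theorem map_one (hc : IsCrossedHom f c) : c 1 = 1 := by
  simpa using hc 1 1

end Monoid

variable [Group K] {f : K →* MulAut H}

theorem act_map_inv (hc : IsCrossedHom f c) (k : K) : f k (c k⁻¹) = (c k)⁻¹ :=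
  eq_inv_of_mul_eq_one_right (by rw [← hc, mul_inv_cancel, hc.map_one])

theorem map_mul_of_act_eq_one (hc : IsCrossedHom f c) {k : K} (hk : f k = 1) (k' : K) :
    c (k * k') = c k * c k' := by
  rw [hc, hk, MulAut.one_apply]

theorem map_conj_of_act_eq_one (hc : IsCrossedHom f c) (hcen : ∀ k, c k ∈ Subgroup.center H)
    {k' : K} (hk' : f k' = 1) (k : K) : c (k * k' * k⁻¹) = f k (c k') := by
  rw [hc, hc, map_mul, MulAut.mul_apply, hk', MulAut.one_apply, hc.act_map_inv,
    ← Subgroup.mem_center_iff.mp (hcen k), mul_inv_cancel_right]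

end IsCrossedHom

theorem mul_inv_apply_mul_of_mem_center {H : Type*} [Group H] {ψ : H → H}
    (hψ : ∀ a b, ψ (a * b) = ψ a * ψ b) (hcen : ∀ h, ψ h ∈ Subgroup.center H) (a b : H) :
    a * b * (ψ (a * b))⁻¹ = a * (ψ a)⁻¹ * (b * (ψ b)⁻¹) := by
  have hz := Subgroup.mem_center_iff.mp (inv_mem (hcen a))
  rw [hψ, mul_inv_rev, hz (ψ b)⁻¹]
  simp only [mul_assoc]
  rw [← mul_assoc b, hz b, mul_assoc]

section SemidirectProductEndomorphism

variable {H K : Type*} [Group H] [Group K] {f : K →* MulAut H} {θ : H ⋊[f] K →* H ⋊[f] K}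
  {β : K → H} {γ : H → K}

theorem act_eq_one_of_map_inl (hθH : ∀ h, θ (inl h) = ⟨h, γ h⟩) (h : H) : f (γ h) = 1 := by
  ext x
  have := map_mul θ (inl h) (inl x)
  rw [← map_mul inl, hθH, hθH, hθH, SemidirectProduct.ext_iff] at this
  simpa [eq_comm] using this.1

theorem map_mul_of_map_inl (hθH : ∀ h, θ (inl h) = ⟨h, γ h⟩) (h x : H) :
    γ (h * x) = γ h * γ x := by
  have := map_mul θ (inl h) (inl x)
  rw [← map_mul inl, hθH, hθH, hθH, SemidirectProduct.ext_iff] at this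
  simpa using this.2

theorem isCrossedHom_of_map_inr (hθK : ∀ k, θ (inr k) = ⟨β k, k⟩) : IsCrossedHom f β := by
  intro k k'
  have := map_mul θ (inr k) (inr k')
  rw [← map_mul inr, hθK, hθK, hθK, SemidirectProduct.ext_iff] at this
  simpa using this.1

theorem map_inr_mul_inl (hθH : ∀ h, θ (inl h) = ⟨h, γ h⟩) (hθK : ∀ k, θ (inr k) = ⟨β k, k⟩)
    (k : K) (h : H) : β k * f k h = f k h * β k ∧ k * γ h = γ (f k h) * k := by
  have := congrArg θ (show inr k * inl h = inl (f k h) * inr k by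
    rw [inl_aut, map_inv, inv_mul_cancel_right])
  rw [map_mul, map_mul, hθH, hθH, hθK, SemidirectProduct.ext_iff] at this
  simpa [act_eq_one_of_map_inl hθH] using this

theorem mem_center_of_map_inr (hθH : ∀ h, θ (inl h) = ⟨h, γ h⟩)
    (hθK : ∀ k, θ (inr k) = ⟨β k, k⟩) (k : K) : β k ∈ Subgroup.center H := by
  refine Subgroup.mem_center_iff.mpr fun g => ?_
  obtain ⟨h, rfl⟩ := (f k).surjective g
  exact (map_inr_mul_inl hθH hθK k h).1.symm

theorem map_act_of_map_inl (hθH : ∀ h, θ (inl h) = ⟨h, γ h⟩) (hθK : ∀ k, θ (inr k) = ⟨β k, k⟩)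
    (k : K) (h : H) : γ (f k h) = k * γ h * k⁻¹ :=
  eq_mul_inv_of_mul_eq (map_inr_mul_inl hθH hθK k h).2.symm

theorem map_mul_mul_inv_comp (hθH : ∀ h, θ (inl h) = ⟨h, γ h⟩)
    (hθK : ∀ k, θ (inr k) = ⟨β k, k⟩) (a b : H) :
    a * b * (β (γ (a * b)))⁻¹ = a * (β (γ a))⁻¹ * (b * (β (γ b))⁻¹) := by
  refine mul_inv_apply_mul_of_mem_center (fun a b => ?_)
    (fun h => mem_center_of_map_inr hθH hθK _) a b
  rw [map_mul_of_map_inl hθH,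
    (isCrossedHom_of_map_inr hθK).map_mul_of_act_eq_one (act_eq_one_of_map_inl hθH a)]

theorem semiconj_mul_inv_comp (hθH : ∀ h, θ (inl h) = ⟨h, γ h⟩)
    (hθK : ∀ k, θ (inr k) = ⟨β k, k⟩) (k : K) :
    Semiconj (fun h => h * (β (γ h))⁻¹) (f k) (f k) := fun h => by
  dsimp only
  rw [map_act_of_map_inl hθH hθK, (isCrossedHom_of_map_inr hθK).map_conj_of_act_eq_one
    (mem_center_of_map_inr hθH hθK) (act_eq_one_of_map_inl hθH h), map_mul, map_inv]

end SemidirectProductEndomorphism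

theorem etaInv_beta_crossed_hom_general
    {H K : Type*} [Group H] [Group K] (f : K →* MulAut H)
    (θ : (H ⋊[f] K) →* (H ⋊[f] K))
    (β : K → H) (γ : H → K)
    (hθH : ∀ h : H, θ ⟨h, 1⟩ = ⟨h, γ h⟩)
    (hθK : ∀ k : K, θ ⟨1, k⟩ = ⟨β k, k⟩)
    (ηi : H → H)
    (hηi : Function.LeftInverse ηi (fun h : H => h * (β (γ h))⁻¹))
    (hηi' : Function.RightInverse ηi (fun h : H => h * (β (γ h))⁻¹)) :
    (∀ k : K, ηi (β k) ∈ Subgroup.center H) ∧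
    (∀ k k' : K, ηi (β (k * k')) = ηi (β k) * f k (ηi (β k'))) := by
  let η : H ≃* H :=
    { toFun h := h * (β (γ h))⁻¹
      invFun := ηi
      left_inv := hηi
      right_inv := hηi'
      map_mul' := map_mul_mul_inv_comp hθH hθK }
  exact ⟨fun k => MulEquivClass.apply_mem_center η.symm (mem_center_of_map_inr hθH hθK k),
    (isCrossedHom_of_map_inr hθK).comp η.symm.toMonoidHom
      fun k => (semiconj_mul_inv_comp hθH hθK k).inverse_left hηi hηi'⟩

/-- Let `θ` be a bijective endomorphism (automorphism) of
`G = H ⋊[f] K` with `θ (h, 1) = (h, γ h)` and `θ (1, k) = (β k, k)`, and let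
`η : h ↦ h * (β (γ h))⁻¹`, a bijective group homomorphism of `H` (with two-sided
inverse `ηi`).  Then `k ↦ ηi (β k)` takes values in the center `Z(H)` and is a
crossed homomorphism: `ηi (β (k * k')) = ηi (β k) * f k (ηi (β k'))`. -/
theorem etaInv_beta_crossed_hom
    {H K : Type*} [Group H] [Group K] (f : K →* MulAut H)
    (θ : (H ⋊[f] K) →* (H ⋊[f] K))
    (hθ : Function.Bijective θ)
    (β : K → H) (γ : H → K)
    (hθH : ∀ h : H, θ ⟨h, 1⟩ = ⟨h, γ h⟩)
    (hθK : ∀ k : K, θ ⟨1, k⟩ = ⟨β k, k⟩)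
    (ηi : H → H)
    (hηi : Function.LeftInverse ηi (fun h : H => h * (β (γ h))⁻¹))
    (hηi' : Function.RightInverse ηi (fun h : H => h * (β (γ h))⁻¹)) :
    (∀ k : K, ηi (β k) ∈ Subgroup.center H) ∧
    (∀ k k' : K, ηi (β (k * k')) = ηi (β k) * f k (ηi (β k'))) :=
  etaInv_beta_crossed_hom_general f θ β γ hθH hθK ηi hηi hηi'
end
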